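/- Let T be a consistent extension of Robinson arithmetic Q such that the set Pr_T of Gödel numbers of sentences provable in T is definable in the standard model ω. Then the sentence ψ(n,t) is true in ω, but T does not prove ψ(n,t). -/

import Mathlib

namespace Boolos

/-- Terms of the first-order language of arithmetic: variables v₀,v₁,…, 0, successor s, +, ·. -/
inductive Term : Type
  | var : ℕ → Term
  | zero : Term
  | succ : Term → Term
  | add : Term → Term → Term
  | mul : Term → Term → Term
  deriving DecidableEq

/-- Formulas of the first-order language of arithmetic. -/
inductive Formula : Type
  | eq : Term → Term → Formula
  | lt : Term → Term → Formula
  | not : Formula → Formula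
  | and : Formula → Formula → Formula
  | or : Formula → Formula → Formula
  | imp : Formula → Formula → Formula
  | all : ℕ → Formula → Formula
  | ex : ℕ → Formula → Formula
  deriving DecidableEq

/-- The primitive symbols of the language (finitely many apart from the variables). -/
inductive Symbol : Type
  | zero : Symbol
  | succ : Symbol
  | plus : Symbol
  | times : Symbol
  | eqs : Symbol
  | lts : Symbol
  | nots : Symbol
  | ands : Symbol
  | ors : Symbol
  | imps : Symbol
  | alls : Symbol
  | exs : Symbol
  | var : ℕ → Symbol
  deriving DecidableEq

/-- Gödel numbers of the primitive symbols. -/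
def Symbol.code : Symbol → ℕ
  | .zero => 1
  | .succ => 2
  | .plus => 3
  | .times => 4
  | .eqs => 5
  | .lts => 6
  | .nots => 7
  | .ands => 8
  | .ors => 9
  | .imps => 10
  | .alls => 11
  | .exs => 12
  | .var n => 13 + n

/-- The sequence of symbols occurring in a term. -/
def Term.symbols : Term → List Symbol
  | .var i => [.var i]
  | .zero => [.zero]
  | .succ t => .succ :: t.symbols
  | .add t u => t.symbols ++ .plus :: u.symbols
  | .mul t u => t.symbols ++ .times :: u.symbols

/-- The sequence of symbols occurring in a formula. -/
def Formula.symbols : Formula → List Symbol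
  | .eq t u => t.symbols ++ .eqs :: u.symbols
  | .lt t u => t.symbols ++ .lts :: u.symbols
  | .not φ => .nots :: φ.symbols
  | .and φ ψ => φ.symbols ++ .ands :: ψ.symbols
  | .or φ ψ => φ.symbols ++ .ors :: ψ.symbols
  | .imp φ ψ => φ.symbols ++ .imps :: ψ.symbols
  | .all i φ => .alls :: .var i :: φ.symbols
  | .ex i φ => .exs :: .var i :: φ.symbols

/-- |e| : the length (number of symbols) of a term. -/
def Term.length (t : Term) : ℕ := t.symbols.length

/-- |μ| : the length (number of symbols) of a formula. -/
def Formula.length (φ : Formula) : ℕ := φ.symbols.length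

/-- A fixed standard (pairing-based, injective) Gödel numbering of terms. -/
def Term.code : Term → ℕ
  | .var i => Nat.pair 0 i
  | .zero => Nat.pair 1 0
  | .succ t => Nat.pair 2 t.code
  | .add t u => Nat.pair 3 (Nat.pair t.code u.code)
  | .mul t u => Nat.pair 4 (Nat.pair t.code u.code)

/-- ⌜μ⌝ : the Gödel number of a formula. -/
def Formula.gnum : Formula → ℕ
  | .eq t u => Nat.pair 0 (Nat.pair t.code u.code)
  | .lt t u => Nat.pair 1 (Nat.pair t.code u.code)
  | .not φ => Nat.pair 2 φ.gnum
  | .and φ ψ => Nat.pair 3 (Nat.pair φ.gnum ψ.gnum)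
  | .or φ ψ => Nat.pair 4 (Nat.pair φ.gnum ψ.gnum)
  | .imp φ ψ => Nat.pair 5 (Nat.pair φ.gnum ψ.gnum)
  | .all i φ => Nat.pair 6 (Nat.pair i φ.gnum)
  | .ex i φ => Nat.pair 7 (Nat.pair i φ.gnum)

/-- The variables occurring in a term. -/
def Term.varsOf : Term → Finset ℕ
  | .var i => {i}
  | .zero => ∅
  | .succ t => t.varsOf
  | .add t u => t.varsOf ∪ u.varsOf
  | .mul t u => t.varsOf ∪ u.varsOf

/-- All variables (free or bound) occurring in a formula. -/
def Formula.allVars : Formula → Finset ℕ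
  | .eq t u => t.varsOf ∪ u.varsOf
  | .lt t u => t.varsOf ∪ u.varsOf
  | .not φ => φ.allVars
  | .and φ ψ => φ.allVars ∪ ψ.allVars
  | .or φ ψ => φ.allVars ∪ ψ.allVars
  | .imp φ ψ => φ.allVars ∪ ψ.allVars
  | .all i φ => insert i φ.allVars
  | .ex i φ => insert i φ.allVars

/-- The free variables of a formula. -/
def Formula.freeVars : Formula → Finset ℕ
  | .eq t u => t.varsOf ∪ u.varsOf
  | .lt t u => t.varsOf ∪ u.varsOf
  | .not φ => φ.freeVars
  | .and φ ψ => φ.freeVars ∪ ψ.freeVars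
  | .or φ ψ => φ.freeVars ∪ ψ.freeVars
  | .imp φ ψ => φ.freeVars ∪ ψ.freeVars
  | .all i φ => φ.freeVars.erase i
  | .ex i φ => φ.freeVars.erase i

/-- Substitution of a term for a variable in a term. -/
def Term.subst : Term → ℕ → Term → Term
  | .var i, x, s => if i = x then s else .var i
  | .zero, _, _ => .zero
  | .succ t, x, s => .succ (t.subst x s)
  | .add t u, x, s => .add (t.subst x s) (u.subst x s)
  | .mul t u, x, s => .mul (t.subst x s) (u.subst x s)

/-- Substitution of a term for the free occurrences of a variable in a formula. -/
def Formula.subst : Formula → ℕ → Term → Formula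
  | .eq t u, x, s => .eq (t.subst x s) (u.subst x s)
  | .lt t u, x, s => .lt (t.subst x s) (u.subst x s)
  | .not φ, x, s => .not (φ.subst x s)
  | .and φ ψ, x, s => .and (φ.subst x s) (ψ.subst x s)
  | .or φ ψ, x, s => .or (φ.subst x s) (ψ.subst x s)
  | .imp φ ψ, x, s => .imp (φ.subst x s) (ψ.subst x s)
  | .all i φ, x, s => if i = x then .all i φ else .all i (φ.subst x s)
  | .ex i φ, x, s => if i = x then .ex i φ else .ex i (φ.subst x s)

/-- The number of occurrences of a variable in a term. -/
def Term.countOcc : Term → ℕ → ℕ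
  | .var i, x => if i = x then 1 else 0
  | .zero, _ => 0
  | .succ t, x => t.countOcc x
  | .add t u, x => t.countOcc x + u.countOcc x
  | .mul t u, x => t.countOcc x + u.countOcc x

/-- The number of free occurrences of a variable in a formula. -/
def Formula.countFreeOcc : Formula → ℕ → ℕ
  | .eq t u, x => t.countOcc x + u.countOcc x
  | .lt t u, x => t.countOcc x + u.countOcc x
  | .not φ, x => φ.countFreeOcc x
  | .and φ ψ, x => φ.countFreeOcc x + ψ.countFreeOcc x
  | .or φ ψ, x => φ.countFreeOcc x + ψ.countFreeOcc x
  | .imp φ ψ, x => φ.countFreeOcc x + ψ.countFreeOcc x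
  | .all i φ, x => if i = x then 0 else φ.countFreeOcc x
  | .ex i φ, x => if i = x then 0 else φ.countFreeOcc x

/-- The numeral s s … s 0 for a natural number. -/
def numeral : ℕ → Term
  | 0 => .zero
  | n + 1 => .succ (numeral n)

/-- Structures for the language of arithmetic. -/
structure Struct where
  carrier : Type
  zero : carrier
  succ : carrier → carrier
  add : carrier → carrier → carrier
  mul : carrier → carrier → carrier
  lt : carrier → carrier → Prop

/-- The value of a term in a structure under an assignment. -/
def Term.val (M : Struct) (v : ℕ → M.carrier) : Term → M.carrier
  | .var i => v i
  | .zero => M.zero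
  | .succ t => M.succ (Term.val M v t)
  | .add t u => M.add (Term.val M v t) (Term.val M v u)
  | .mul t u => M.mul (Term.val M v t) (Term.val M v u)

/-- Satisfaction of a formula in a structure under an assignment. -/
def Formula.Realize (M : Struct) : (ℕ → M.carrier) → Formula → Prop
  | v, .eq t u => Term.val M v t = Term.val M v u
  | v, .lt t u => M.lt (Term.val M v t) (Term.val M v u)
  | v, .not φ => ¬ Formula.Realize M v φ
  | v, .and φ ψ => Formula.Realize M v φ ∧ Formula.Realize M v ψ
  | v, .or φ ψ => Formula.Realize M v φ ∨ Formula.Realize M v ψ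
  | v, .imp φ ψ => Formula.Realize M v φ → Formula.Realize M v ψ
  | v, .all i φ => ∀ a : M.carrier, Formula.Realize M (Function.update v i a) φ
  | v, .ex i φ => ∃ a : M.carrier, Formula.Realize M (Function.update v i a) φ

/-- ω : the standard model of arithmetic. -/
@[reducible] def stdModel : Struct :=
  { carrier := ℕ, zero := 0, succ := Nat.succ, add := (· + ·), mul := (· * ·),
    lt := (· < ·) }

/-- A formula is true if it holds in the standard model ω (under every assignment). -/
def IsTrue (φ : Formula) : Prop := ∀ v : ℕ → ℕ, Formula.Realize stdModel v φ

/-- The value of a (closed) term in the standard model ω. -/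
def Term.valNat (t : Term) : ℕ := Term.val stdModel (fun _ => 0) t

/-- A sentence is a formula with no free variables. -/
def Formula.IsSentence (φ : Formula) : Prop := φ.freeVars = ∅

/-- Provability from a theory; by the Gödel completeness theorem, identified with
semantic consequence. -/
def Proves (T : Set Formula) (φ : Formula) : Prop :=
  ∀ (M : Struct) (v : ℕ → M.carrier),
    (∀ ψ ∈ T, Formula.Realize M v ψ) → Formula.Realize M v φ

/-- Consistency: no formula is both provable and refutable. -/
def Consistent (T : Set Formula) : Prop :=
  ¬ ∃ φ : Formula, Proves T φ ∧ Proves T (.not φ)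

/-- The biconditional, as an abbreviation. -/
def Formula.iffF (φ ψ : Formula) : Formula := .and (.imp φ ψ) (.imp ψ φ)

def v0 : Term := .var 0
def v1 : Term := .var 1
def v2 : Term := .var 2

/-- The axioms of Robinson arithmetic Q (with < defined as usual). -/
def QAxioms : Set Formula :=
  { .all 0 (.all 1 (.imp (.eq (.succ v0) (.succ v1)) (.eq v0 v1))),
    .all 0 (.not (.eq (.succ v0) .zero)),
    .all 0 (.imp (.not (.eq v0 .zero)) (.ex 1 (.eq v0 (.succ v1)))),
    .all 0 (.eq (.add v0 .zero) v0),
    .all 0 (.all 1 (.eq (.add v0 (.succ v1)) (.succ (.add v0 v1)))),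
    .all 0 (.eq (.mul v0 .zero) .zero),
    .all 0 (.all 1 (.eq (.mul v0 (.succ v1)) (.add (.mul v0 v1) v0))),
    .all 0 (.all 1 (Formula.iffF (.lt v0 v1) (.ex 2 (.eq (.add v2 (.succ v0)) v1)))) }

/-- Pr_S : the set of Gödel numbers of sentences provable in S. -/
def PrSet (T : Set Formula) : Set ℕ :=
  {m | ∃ σ : Formula, σ.IsSentence ∧ Proves T σ ∧ m = σ.gnum}

/-- A formula μ with at most the free variable v₀ names the number i in T
if T ⊢ (∀v₀)(μ(v₀) ↔ v₀ = i). -/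
def Names (T : Set Formula) (μ : Formula) (i : ℕ) : Prop :=
  μ.freeVars ⊆ {0} ∧ Proves T (.all 0 (Formula.iffF μ (.eq v0 (numeral i))))

/-- i is named in T by some formula of length < m. -/
def Nameable (T : Set Formula) (m i : ℕ) : Prop :=
  ∃ μ : Formula, μ.length < m ∧ Names T μ i

/-- φ(v₀) defines the set A in the standard model ω. -/
def DefinesSet (φ : Formula) (A : Set ℕ) : Prop :=
  φ.freeVars ⊆ {0} ∧ ∀ i : ℕ, i ∈ A ↔ IsTrue (φ.subst 0 (numeral i))

/-- A set of natural numbers is definable (in ω). -/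
def Definable (A : Set ℕ) : Prop := ∃ φ : Formula, DefinesSet φ A

/-- φ(v₀,v₁) defines the binary relation R in the standard model ω. -/
def DefinesRel (φ : Formula) (R : ℕ → ℕ → Prop) : Prop :=
  φ.freeVars ⊆ {0, 1} ∧
    ∀ i j : ℕ, R i j ↔ IsTrue ((φ.subst 0 (numeral i)).subst 1 (numeral j))

/-- The relation B of Boolos's construction: (i,j) ∈ B iff some formula μ with at most
the free variable v₀, with ⌜μ⌝ < g(j) and |μ| < j, names i. -/
def BRel (T : Set Formula) (g : ℕ → ℕ) (i j : ℕ) : Prop :=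
  ∃ μ : Formula, μ.gnum < g j ∧ μ.length < j ∧ Names T μ i

/-- g is a recursive function bounding Gödel numbers in terms of length, as in the
construction: whenever all variables of μ are among the first j ones and |μ| < j,
we have ⌜μ⌝ < g(j). -/
def GoodBound (g : ℕ → ℕ) : Prop :=
  Computable g ∧
    ∀ (μ : Formula) (j : ℕ), μ.allVars ⊆ Finset.range j → μ.length < j → μ.gnum < g j

/-- ψ(v₀,v₁) ≔ ¬φ(v₀,v₁) ∧ (∀v₂ < v₀) φ(v₂,v₁). -/
def psiOf (φ : Formula) : Formula :=
  .and (.not φ) (.all 2 (.imp (.lt v2 v0) (φ.subst 0 v2)))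

/-- The closed term t ≔ 10·(k·k). -/
def tTerm (k : ℕ) : Term := .mul (numeral 10) (.mul (numeral k) (numeral k))

/-!
ψ(v₀, t) says that v₀ is the least i with ¬B(i, 𝐭). A formula of length < 𝐭 can be rewritten,
by renaming its variables according to their rank, into one using only the first 𝐭 variables,
so its Gödel number lies below g(𝐭); hence B(i, 𝐭) holds exactly when i is named by a formula of
length < 𝐭, and ψ(n, t) is true by the choice of n. If T proved ψ(n, t), then, since in every
model of Q each element is comparable with every numeral, T would prove that n is the only
number satisfying ψ(v₀, t), i.e. ψ(v₀, t) would name n. But substituting t, of length 2k + 15,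
for fewer than k₂ occurrences of v₁ in ψ keeps the length below 10k², contradicting the choice
of n.
-/

open Function

section Semantics

variable {M : Struct}

theorem Term.val_congr {v w : ℕ → M.carrier} (t : Term) (h : ∀ i ∈ t.varsOf, v i = w i) :
    t.val M v = t.val M w := by
  induction t with
  | var i => exact h i (by simp [Term.varsOf])
  | zero => rfl
  | succ t ih => exact congrArg M.succ (ih h)
  | add t u iht ihu | mul t u iht ihu =>
    simp only [Term.varsOf, Finset.mem_union] at h
    simp only [Term.val, iht fun i hi => h i (.inl hi), ihu fun i hi => h i (.inr hi)]

theorem Term.val_eq_of_varsOf_eq_empty {t : Term} (ht : t.varsOf = ∅) (v w : ℕ → M.carrier) :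
    t.val M v = t.val M w :=
  t.val_congr fun i hi => by simp [ht] at hi

theorem Formula.realize_congr (φ : Formula) {v w : ℕ → M.carrier}
    (h : ∀ i ∈ φ.freeVars, v i = w i) : φ.Realize M v ↔ φ.Realize M w := by
  induction φ generalizing v w with
  | eq t u | lt t u =>
    simp only [Formula.freeVars, Finset.mem_union] at h
    simp only [Formula.Realize, Term.val_congr t fun i hi => h i (.inl hi),
      Term.val_congr u fun i hi => h i (.inr hi)]
  | not φ ih => exact not_congr (ih h)
  | and φ ψ ih₁ ih₂ | or φ ψ ih₁ ih₂ | imp φ ψ ih₁ ih₂ =>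
    simp only [Formula.freeVars, Finset.mem_union] at h
    simp only [Formula.Realize, ih₁ fun i hi => h i (.inl hi), ih₂ fun i hi => h i (.inr hi)]
  | all j φ ih | ex j φ ih =>
    simp only [Formula.freeVars, Finset.mem_erase] at h
    have (a : M.carrier) : φ.Realize M (update v j a) ↔ φ.Realize M (update w j a) :=
      ih fun i hi => by
        rcases eq_or_ne i j with rfl | hij
        · simp
        · simp [update_of_ne hij, h i ⟨hij, hi⟩]
    simp only [Formula.Realize, this]

theorem Formula.IsSentence.realize_iff {σ : Formula} (hσ : σ.IsSentence) (v w : ℕ → M.carrier) :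
    σ.Realize M v ↔ σ.Realize M w :=
  σ.realize_congr fun i hi => by simp [Formula.IsSentence] at hσ; simp [hσ] at hi

theorem Formula.realize_iffF {φ ψ : Formula} {v : ℕ → M.carrier} :
    (φ.iffF ψ).Realize M v ↔ (φ.Realize M v ↔ ψ.Realize M v) := by
  simp only [Formula.iffF, Formula.Realize, iff_iff_implies_and_implies]

theorem Term.val_subst {v : ℕ → M.carrier} {x : ℕ} {s : Term} (t : Term) :
    (t.subst x s).val M v = t.val M (update v x (s.val M v)) := by
  induction t with
  | var i =>
    by_cases h : i = x
    · subst h; simp [Term.subst, Term.val]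
    · simp [Term.subst, h, Term.val]
  | zero => rfl
  | succ t ih => exact congrArg M.succ ih
  | add t u iht ihu | mul t u iht ihu => simp only [Term.subst, Term.val, iht, ihu]

theorem Formula.realize_subst {x : ℕ} {s : Term} (φ : Formula) (v : ℕ → M.carrier)
    (hs : ∀ i ∈ φ.allVars, i ∉ s.varsOf) :
    (φ.subst x s).Realize M v ↔ φ.Realize M (update v x (s.val M v)) := by
  induction φ generalizing v with
  | eq t u | lt t u => simp only [Formula.subst, Formula.Realize, Term.val_subst]
  | not φ ih => exact not_congr (ih v hs)
  | and φ ψ ih₁ ih₂ | or φ ψ ih₁ ih₂ | imp φ ψ ih₁ ih₂ =>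
    simp only [Formula.allVars, Finset.mem_union] at hs
    simp only [Formula.subst, Formula.Realize, ih₁ v fun i hi => hs i (.inl hi),
      ih₂ v fun i hi => hs i (.inr hi)]
  | all j φ ih | ex j φ ih =>
    simp only [Formula.allVars, Finset.mem_insert] at hs
    by_cases hj : j = x
    · subst hj
      simp [Formula.subst, Formula.Realize]
    · have hval (a : M.carrier) : s.val M (update v j a) = s.val M v :=
        s.val_congr fun i hi => update_of_ne (by rintro rfl; exact hs i (.inl rfl) hi) _ _
      simp only [Formula.subst, if_neg hj, Formula.Realize, ih _ fun i hi => hs i (.inr hi),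
        hval, update_comm hj]

theorem Formula.realize_subst_of_varsOf_eq_empty {x : ℕ} {s : Term} (hs : s.varsOf = ∅)
    (φ : Formula) (v : ℕ → M.carrier) :
    (φ.subst x s).Realize M v ↔ φ.Realize M (update v x (s.val M v)) :=
  φ.realize_subst v fun i _ => by simp [hs]

theorem Formula.realize_subst_subst {x y : ℕ} (hxy : x ≠ y) {s t : Term} (hs : s.varsOf = ∅)
    (ht : t.varsOf = ∅) (φ : Formula) (v : ℕ → M.carrier) :
    ((φ.subst x s).subst y t).Realize M v ↔
      φ.Realize M (update (update v x (s.val M v)) y (t.val M v)) := by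
  rw [realize_subst_of_varsOf_eq_empty ht, realize_subst_of_varsOf_eq_empty hs,
    Term.val_eq_of_varsOf_eq_empty hs _ v, update_comm hxy]

end Semantics

section Substitution

@[simp] theorem numeral_varsOf (m : ℕ) : (numeral m).varsOf = ∅ := by
  induction m with
  | zero => rfl
  | succ m ih => exact ih

@[simp] theorem numeral_val_stdModel (v : ℕ → ℕ) (m : ℕ) : (numeral m).val stdModel v = m := by
  induction m with
  | zero => rfl
  | succ m ih => exact congrArg Nat.succ ih

@[simp] theorem numeral_length (m : ℕ) : (numeral m).length = m + 1 := by
  induction m with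
  | zero => rfl
  | succ m ih => simpa [numeral, Term.length, Term.symbols] using ih

@[simp] theorem tTerm_varsOf (k : ℕ) : (tTerm k).varsOf = ∅ := by
  simp [tTerm, Term.varsOf]

@[simp] theorem tTerm_val_stdModel (v : ℕ → ℕ) (k : ℕ) :
    (tTerm k).val stdModel v = 10 * (k * k) := by
  simp [tTerm, Term.val]

theorem tTerm_length (k : ℕ) : (tTerm k).length = 2 * k + 15 := by
  have h10 := numeral_length 10
  have hk := numeral_length k
  simp only [Term.length, Term.symbols, List.length_append, List.length_cons, tTerm] at *
  omega

theorem Formula.length_pos (φ : Formula) : 0 < φ.length := by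
  cases φ <;> simp [Formula.length, Formula.symbols]

theorem Term.length_subst (x : ℕ) (s t : Term) :
    (t.subst x s).length + t.countOcc x = t.length + t.countOcc x * s.length := by
  induction t with
  | var i =>
    by_cases h : i = x <;> simp [Term.subst, Term.countOcc, h, Term.length, Term.symbols]
    omega
  | zero => simp [Term.subst, Term.countOcc]
  | succ t ih => simp_all [Term.subst, Term.countOcc, Term.length, Term.symbols]; omega
  | add t u iht ihu | mul t u iht ihu =>
    simp_all [Term.subst, Term.countOcc, Term.length, Term.symbols, Nat.add_mul]; omega

theorem Formula.length_subst (x : ℕ) (s : Term) (φ : Formula) :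
    (φ.subst x s).length + φ.countFreeOcc x = φ.length + φ.countFreeOcc x * s.length := by
  induction φ with
  | eq t u | lt t u =>
    have h₁ := Term.length_subst x s t
    have h₂ := Term.length_subst x s u
    simp_all [Formula.subst, Formula.countFreeOcc, Formula.length, Formula.symbols,
      Term.length, Nat.add_mul]
    omega
  | not φ ih =>
    simp_all [Formula.subst, Formula.countFreeOcc, Formula.length, Formula.symbols]
    omega
  | and φ ψ ih₁ ih₂ | or φ ψ ih₁ ih₂ | imp φ ψ ih₁ ih₂ =>
    simp_all [Formula.subst, Formula.countFreeOcc, Formula.length, Formula.symbols, Nat.add_mul]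
    omega
  | all j φ ih | ex j φ ih =>
    by_cases h : j = x <;>
      simp_all [Formula.subst, Formula.countFreeOcc, Formula.length, Formula.symbols]
    omega

theorem Term.varsOf_subst_subset (x : ℕ) (s t : Term) :
    (t.subst x s).varsOf ⊆ t.varsOf.erase x ∪ s.varsOf := by
  induction t with
  | var i => by_cases h : i = x <;> simp [Term.subst, Term.varsOf, h]
  | zero => simp [Term.subst, Term.varsOf]
  | succ t ih => exact ih
  | add t u iht ihu | mul t u iht ihu =>
    intro j
    have := @iht j
    have := @ihu j
    simp only [Term.subst, Term.varsOf, Finset.mem_union, Finset.mem_erase] at *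
    tauto

theorem Formula.freeVars_subst_subset (x : ℕ) (s : Term) (φ : Formula) :
    (φ.subst x s).freeVars ⊆ φ.freeVars.erase x ∪ s.varsOf := by
  induction φ with
  | eq t u | lt t u =>
    intro j
    have := @Term.varsOf_subst_subset x s t j
    have := @Term.varsOf_subst_subset x s u j
    simp only [Formula.subst, Formula.freeVars, Finset.mem_union, Finset.mem_erase] at *
    tauto
  | not φ ih => exact ih
  | and φ ψ ih₁ ih₂ | or φ ψ ih₁ ih₂ | imp φ ψ ih₁ ih₂ =>
    intro j
    have := @ih₁ j
    have := @ih₂ j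
    simp only [Formula.subst, Formula.freeVars, Finset.mem_union, Finset.mem_erase] at *
    tauto
  | all i φ ih | ex i φ ih =>
    intro j
    have := @ih j
    by_cases h : i = x
    · subst h
      simp only [Formula.subst, if_pos, Formula.freeVars, Finset.mem_union, Finset.mem_erase]
      tauto
    · simp only [Formula.subst, if_neg h, Formula.freeVars, Finset.mem_union,
        Finset.mem_erase] at *
      tauto

theorem Formula.freeVars_subset_allVars (φ : Formula) : φ.freeVars ⊆ φ.allVars := by
  induction φ with
  | eq t u | lt t u => exact subset_rfl
  | not φ ih => exact ih
  | and φ ψ ih₁ ih₂ | or φ ψ ih₁ ih₂ | imp φ ψ ih₁ ih₂ => exact Finset.union_subset_union ih₁ ih₂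
  | all i φ ih | ex i φ ih =>
    exact (Finset.erase_subset _ _).trans (ih.trans (Finset.subset_insert _ _))

end Substitution

section Rename

def Term.rename (ρ : ℕ → ℕ) : Term → Term
  | .var i => .var (ρ i)
  | .zero => .zero
  | .succ t => .succ (t.rename ρ)
  | .add t u => .add (t.rename ρ) (u.rename ρ)
  | .mul t u => .mul (t.rename ρ) (u.rename ρ)

def Formula.rename (ρ : ℕ → ℕ) : Formula → Formula
  | .eq t u => .eq (t.rename ρ) (u.rename ρ)
  | .lt t u => .lt (t.rename ρ) (u.rename ρ)
  | .not φ => .not (φ.rename ρ)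
  | .and φ ψ => .and (φ.rename ρ) (ψ.rename ρ)
  | .or φ ψ => .or (φ.rename ρ) (ψ.rename ρ)
  | .imp φ ψ => .imp (φ.rename ρ) (ψ.rename ρ)
  | .all i φ => .all (ρ i) (φ.rename ρ)
  | .ex i φ => .ex (ρ i) (φ.rename ρ)

variable (ρ : ℕ → ℕ)

@[simp] theorem Term.length_rename (t : Term) : (t.rename ρ).length = t.length := by
  induction t <;> simp_all [Term.rename, Term.length, Term.symbols]

@[simp] theorem Formula.length_rename (φ : Formula) : (φ.rename ρ).length = φ.length := by
  induction φ <;> simp_all [Formula.rename, Formula.length, Formula.symbols, ← Term.length.eq_1]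

@[simp] theorem numeral_rename (m : ℕ) : (numeral m).rename ρ = numeral m := by
  induction m with
  | zero => rfl
  | succ m ih => exact congrArg Term.succ ih

theorem Term.varsOf_rename (t : Term) : (t.rename ρ).varsOf = t.varsOf.image ρ := by
  induction t <;> simp_all [Term.rename, Term.varsOf, Finset.image_union]

theorem Formula.allVars_rename (φ : Formula) : (φ.rename ρ).allVars = φ.allVars.image ρ := by
  induction φ <;>
    simp_all [Formula.rename, Formula.allVars, Term.varsOf_rename, Finset.image_union]

theorem Formula.freeVars_rename_subset (φ : Formula) :
    (φ.rename ρ).freeVars ⊆ φ.freeVars.image ρ := by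
  induction φ with
  | eq t u | lt t u =>
    simp [Formula.rename, Formula.freeVars, Term.varsOf_rename, Finset.image_union]
  | not φ ih => exact ih
  | and φ ψ ih₁ ih₂ | or φ ψ ih₁ ih₂ | imp φ ψ ih₁ ih₂ =>
    simpa only [Formula.rename, Formula.freeVars, Finset.image_union] using
      Finset.union_subset_union ih₁ ih₂
  | all i φ ih | ex i φ ih =>
    intro j hj
    simp only [Formula.rename, Formula.freeVars, Finset.mem_erase] at hj
    obtain ⟨a, ha, rfl⟩ := Finset.mem_image.mp (ih hj.2)
    exact Finset.mem_image.mpr ⟨a, Finset.mem_erase.mpr ⟨by rintro rfl; exact hj.1 rfl, ha⟩, rfl⟩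

theorem Term.val_rename {M : Struct} (v : ℕ → M.carrier) (t : Term) :
    (t.rename ρ).val M v = t.val M (v ∘ ρ) := by
  induction t <;> simp_all [Term.rename, Term.val]

theorem Formula.realize_rename {M : Struct} {ρ : ℕ → ℕ} (φ : Formula) (v : ℕ → M.carrier)
    (hρ : Set.InjOn ρ φ.allVars) : (φ.rename ρ).Realize M v ↔ φ.Realize M (v ∘ ρ) := by
  induction φ generalizing v with
  | eq t u | lt t u => simp [Formula.rename, Formula.Realize, Term.val_rename]
  | not φ ih => exact not_congr (ih v hρ)
  | and φ ψ ih₁ ih₂ | or φ ψ ih₁ ih₂ | imp φ ψ ih₁ ih₂ =>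
    simp only [Formula.allVars, Finset.coe_union] at hρ
    simp only [Formula.rename, Formula.Realize, ih₁ v (hρ.mono Set.subset_union_left),
      ih₂ v (hρ.mono Set.subset_union_right)]
  | all i φ ih | ex i φ ih =>
    simp only [Formula.allVars, Finset.coe_insert] at hρ
    have (a : M.carrier) : φ.Realize M (update v (ρ i) a ∘ ρ) ↔ φ.Realize M (update (v ∘ ρ) i a) :=
      φ.realize_congr fun j hj => by
        rcases eq_or_ne j i with rfl | hji
        · simp
        · have hρji : ρ j ≠ ρ i := fun h => hji <| hρ
            (Set.mem_insert_of_mem _ (φ.freeVars_subset_allVars hj)) (Set.mem_insert _ _) h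
          simp [update_of_ne hρji, update_of_ne hji]
    simp only [Formula.rename, Formula.Realize, ih _ (hρ.mono (Set.subset_insert _ _)), this]

end Rename

section Naming

theorem Term.card_varsOf_le_length (t : Term) : t.varsOf.card ≤ t.length := by
  induction t with
  | var i => simp [Term.varsOf, Term.length, Term.symbols]
  | zero => simp [Term.varsOf]
  | succ t ih => simp_all [Term.varsOf, Term.length, Term.symbols]; omega
  | add t u iht ihu | mul t u iht ihu =>
    have := Finset.card_union_le t.varsOf u.varsOf
    simp_all [Term.varsOf, Term.length, Term.symbols]
    omega

theorem Formula.card_allVars_le_length (φ : Formula) : φ.allVars.card ≤ φ.length := by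
  induction φ with
  | eq t u | lt t u =>
    have := Finset.card_union_le t.varsOf u.varsOf
    have := t.card_varsOf_le_length
    have := u.card_varsOf_le_length
    simp_all [Formula.allVars, Formula.length, Formula.symbols, Term.length]
    omega
  | not φ ih => simp_all [Formula.allVars, Formula.length, Formula.symbols]; omega
  | and φ ψ ih₁ ih₂ | or φ ψ ih₁ ih₂ | imp φ ψ ih₁ ih₂ =>
    have := Finset.card_union_le φ.allVars ψ.allVars
    simp_all [Formula.allVars, Formula.length, Formula.symbols]
    omega
  | all i φ ih | ex i φ ih =>
    have := Finset.card_insert_le i φ.allVars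
    simp_all [Formula.allVars, Formula.length, Formula.symbols]
    omega

def rankIn (A : Finset ℕ) (x : ℕ) : ℕ := (A.filter (· < x)).card

theorem rankIn_zero (A : Finset ℕ) : rankIn A 0 = 0 := by
  simp [rankIn]

theorem rankIn_lt_card {A : Finset ℕ} {x : ℕ} (hx : x ∈ A) : rankIn A x < A.card :=
  Finset.card_lt_card <| Finset.filter_ssubset.mpr ⟨x, hx, lt_irrefl x⟩

theorem strictMonoOn_rankIn (A : Finset ℕ) : StrictMonoOn (rankIn A) A := by
  intro x hx y _ hxy
  refine Finset.card_lt_card (Finset.ssubset_iff_of_subset ?_ |>.mpr ⟨x, ?_, ?_⟩)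
  · exact Finset.monotone_filter_right _ fun _ _ h => h.trans hxy
  · simpa [hxy] using hx
  · simp

variable {T : Set Formula}

theorem Names.rename (hT : ∀ σ ∈ T, σ.IsSentence) {μ : Formula} {i : ℕ} {ρ : ℕ → ℕ}
    (hρ0 : ρ 0 = 0) (hρ : Set.InjOn ρ ↑(insert 0 μ.allVars)) (h : Names T μ i) :
    Names T (μ.rename ρ) i := by
  refine ⟨fun j hj => ?_, fun M v hTv => ?_⟩
  · obtain ⟨a, ha, rfl⟩ := Finset.mem_image.mp (μ.freeVars_rename_subset ρ hj)
    simp [Finset.mem_singleton.mp (h.1 ha), hρ0]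
  · have hσ : (Formula.all 0 (μ.iffF (.eq v0 (numeral i)))).rename ρ =
        .all 0 ((μ.rename ρ).iffF (.eq v0 (numeral i))) := by
      simp [Formula.rename, Formula.iffF, Term.rename, v0, hρ0]
    rw [← hσ, Formula.realize_rename _ _ (hρ.mono ?_)]
    · exact h.2 M (v ∘ ρ) fun σ hσT => ((hT σ hσT).realize_iff _ _).mp (hTv σ hσT)
    · intro j
      simp [Formula.allVars, Formula.iffF, v0, Term.varsOf]

theorem Names.exists_allVars_subset_range (hT : ∀ σ ∈ T, σ.IsSentence) {μ : Formula} {i : ℕ}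
    (h : Names T μ i) : ∃ μ' : Formula, μ'.length = μ.length ∧
      μ'.allVars ⊆ Finset.range (μ.length + 1) ∧ Names T μ' i := by
  set A := insert 0 μ.allVars
  refine ⟨μ.rename (rankIn A), μ.length_rename _, ?_,
    h.rename hT (rankIn_zero A) (strictMonoOn_rankIn A).injOn⟩
  have hA : A.card ≤ μ.length + 1 :=
    (Finset.card_insert_le _ _).trans (by simpa using μ.card_allVars_le_length)
  rw [Formula.allVars_rename]
  intro j hj
  obtain ⟨a, ha, rfl⟩ := Finset.mem_image.mp hj
  exact Finset.mem_range.mpr ((rankIn_lt_card (Finset.mem_insert_of_mem ha)).trans_le hA)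

theorem bRel_iff_nameable {g : ℕ → ℕ} (hg : GoodBound g) (hT : ∀ σ ∈ T, σ.IsSentence)
    {i m : ℕ} : BRel T g i m ↔ Nameable T m i := by
  refine ⟨fun ⟨μ, _, hlen, hμ⟩ => ⟨μ, hlen, hμ⟩, fun ⟨μ, hlen, hμ⟩ => ?_⟩
  obtain ⟨μ', hlen', hvars, hμ'⟩ := hμ.exists_allVars_subset_range hT
  have hvars' : μ'.allVars ⊆ Finset.range m := hvars.trans (Finset.range_subset_range.mpr hlen)
  rw [← hlen'] at hlen
  exact ⟨μ', hg.2 μ' m hvars' hlen, hlen, hμ'⟩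

end Naming

section RobinsonArithmetic

variable {M : Struct}

theorem realize_QAxioms {v : ℕ → M.carrier} (hQ : ∀ σ ∈ QAxioms, σ.Realize M v) :
    (∀ a, a ≠ M.zero → ∃ b, a = M.succ b) ∧ (∀ a, M.add a M.zero = a) ∧
      (∀ a b, M.add a (M.succ b) = M.succ (M.add a b)) ∧
      (∀ a b, M.lt a b ↔ ∃ c, M.add c (M.succ a) = b) := by
  have h₃ := hQ (.all 0 (.imp (.not (.eq v0 .zero)) (.ex 1 (.eq v0 (.succ v1)))))
    (by simp [QAxioms])
  have h₄ := hQ (.all 0 (.eq (.add v0 .zero) v0)) (by simp [QAxioms])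
  have h₅ := hQ (.all 0 (.all 1 (.eq (.add v0 (.succ v1)) (.succ (.add v0 v1)))))
    (by simp [QAxioms])
  have h₈ := hQ (.all 0 (.all 1 (Formula.iffF (.lt v0 v1) (.ex 2 (.eq (.add v2 (.succ v0)) v1)))))
    (by simp [QAxioms])
  simp only [Formula.Realize, Formula.realize_iffF, Term.val, v0, v1, v2, update_self, ne_eq,
    zero_ne_one, OfNat.zero_ne_ofNat, OfNat.one_ne_ofNat, not_false_eq_true, update_of_ne]
    at h₃ h₄ h₅ h₈
  exact ⟨h₃, h₄, h₅, h₈⟩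

theorem lt_trichotomy_numeral {v : ℕ → M.carrier} (hQ : ∀ σ ∈ QAxioms, σ.Realize M v)
    (w : ℕ → M.carrier) (n : ℕ) (a : M.carrier) :
    M.lt a ((numeral n).val M w) ∨ a = (numeral n).val M w ∨ M.lt ((numeral n).val M w) a := by
  obtain ⟨succ_of_ne_zero, add_zero, add_succ, lt_iff⟩ := realize_QAxioms hQ
  have zero_lt_succ (b : M.carrier) : M.lt M.zero (M.succ b) :=
    (lt_iff _ _).mpr ⟨b, by rw [add_succ, add_zero]⟩
  have succ_lt_succ {b c : M.carrier} (h : M.lt b c) : M.lt (M.succ b) (M.succ c) := by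
    obtain ⟨d, rfl⟩ := (lt_iff _ _).mp h
    exact (lt_iff _ _).mpr ⟨d, add_succ _ _⟩
  induction n generalizing a with
  | zero =>
    by_cases h : a = M.zero
    · exact .inr (.inl h)
    · obtain ⟨b, rfl⟩ := succ_of_ne_zero a h
      exact .inr (.inr (zero_lt_succ b))
  | succ n ih =>
    by_cases h : a = M.zero
    · exact .inl (h ▸ zero_lt_succ _)
    · obtain ⟨b, rfl⟩ := succ_of_ne_zero a h
      rcases ih b with hb | rfl | hb
      · exact .inl (succ_lt_succ hb)
      · exact .inr (.inl rfl)
      · exact .inr (.inr (succ_lt_succ hb))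

end RobinsonArithmetic

section PsiFormula

theorem eq_of_least_counterexample {α : Type*} {lt : α → α → Prop} {R : α → Prop} {x a : α}
    (htri : lt a x ∨ a = x ∨ lt x a) (hx : ¬R x ∧ ∀ b, lt b x → R b)
    (ha : ¬R a ∧ ∀ b, lt b a → R b) : a = x := by
  rcases htri with h | h | h
  · exact absurd (hx.2 a h) ha.1
  · exact h
  · exact absurd (ha.2 x h) hx.1

variable {M : Struct} {φ : Formula}

theorem freeVars_psiOf_subset (hφ : φ.freeVars ⊆ {0, 1}) : (psiOf φ).freeVars ⊆ {0, 1} := by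
  intro j hj
  have := @Formula.freeVars_subst_subset 0 v2 φ j
  simp only [psiOf, Formula.freeVars, v0, v2, Term.varsOf, Finset.mem_union, Finset.mem_erase,
    Finset.mem_singleton] at hj this
  have := @hφ j
  simp only [Finset.mem_insert, Finset.mem_singleton] at this ⊢
  tauto

theorem realize_psiOf (hφ2 : 2 ∉ φ.allVars) (v : ℕ → M.carrier) (a c : M.carrier) :
    (psiOf φ).Realize M (update (update v 0 a) 1 c) ↔
      ¬φ.Realize M (update (update v 0 a) 1 c) ∧
        ∀ b, M.lt b a → φ.Realize M (update (update v 0 b) 1 c) := by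
  simp only [psiOf, Formula.Realize, Term.val, v0, v2]
  refine and_congr_right' (forall_congr' fun b => ?_)
  rw [Formula.realize_subst _ _ fun i hi => by
    simpa [Term.varsOf] using ne_of_mem_of_not_mem hi hφ2]
  simp only [Term.val, update_self, update_of_ne (show (0 : ℕ) ≠ 2 by decide)]
  refine imp_congr_right fun _ => φ.realize_congr fun j hj => ?_
  have hj2 : j ≠ 2 := ne_of_mem_of_not_mem (φ.freeVars_subset_allVars hj) hφ2
  simp only [update_apply]
  split_ifs <;> simp_all

theorem DefinesRel.realize_iff {R : ℕ → ℕ → Prop} (hφ : DefinesRel φ R) (v : ℕ → ℕ) (i j : ℕ) :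
    φ.Realize stdModel (update (update v 0 i) 1 j) ↔ R i j := by
  simp only [hφ.2 i j, IsTrue, numeral_val_stdModel,
    Formula.realize_subst_subst zero_ne_one (numeral_varsOf i) (numeral_varsOf j)]
  refine ⟨fun h w => (φ.realize_congr fun l hl => ?_).mp h, fun h => h v⟩
  rcases (by simpa using hφ.1 hl : l = 0 ∨ l = 1) with rfl | rfl <;> simp

theorem length_subst_tTerm_lt (χ : Formula) {x k₂ : ℕ} (hk₂ : χ.countFreeOcc x < k₂) :
    (χ.subst x (tTerm (χ.length * k₂))).length < 10 * (χ.length * k₂ * (χ.length * k₂)) := by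
  have hsubst := χ.length_subst x (tTerm (χ.length * k₂))
  rw [tTerm_length] at hsubst
  have hLk : χ.length ≤ χ.length * k₂ := Nat.le_mul_of_pos_right _ (by omega)
  have hck : χ.countFreeOcc x + 1 ≤ χ.length * k₂ :=
    hk₂.trans_le (Nat.le_mul_of_pos_left k₂ χ.length_pos)
  generalize χ.length * k₂ = k at *
  nlinarith [Nat.mul_le_mul_right (2 * k + 15) hck]

theorem names_psiOf_subst_of_proves {T : Set Formula} (hQT : QAxioms ⊆ T)
    (hφ : φ.freeVars ⊆ {0, 1}) (hφ2 : 2 ∉ φ.allVars) {t : Term} (ht : t.varsOf = ∅) {n : ℕ}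
    (hp : Proves T (((psiOf φ).subst 0 (numeral n)).subst 1 t)) :
    Names T ((psiOf φ).subst 1 t) n := by
  refine ⟨fun j hj => ?_, fun M v hTv => ?_⟩
  · have := (psiOf φ).freeVars_subst_subset 1 t hj
    simp only [ht, Finset.union_empty, Finset.mem_erase] at this
    have := freeVars_psiOf_subset hφ this.2
    simp_all
  · set R : M.carrier → Prop := fun c => φ.Realize M (update (update v 0 c) 1 (t.val M v))
    have hμ (a : M.carrier) : ((psiOf φ).subst 1 t).Realize M (update v 0 a) ↔
        ¬R a ∧ ∀ b, M.lt b a → R b := by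
      rw [Formula.realize_subst_of_varsOf_eq_empty ht, t.val_eq_of_varsOf_eq_empty ht _ v,
        realize_psiOf hφ2]
    have hψn := hp M v hTv
    rw [Formula.realize_subst_subst zero_ne_one (numeral_varsOf n) ht, realize_psiOf hφ2] at hψn
    have hQ (σ) (hσ : σ ∈ QAxioms) : σ.Realize M v := hTv σ (hQT hσ)
    simp only [Formula.Realize, Formula.realize_iffF, Term.val, v0, update_self,
      (numeral n).val_eq_of_varsOf_eq_empty (numeral_varsOf n) _ v]
    exact fun a => ⟨fun ha => eq_of_least_counterexample
      (lt_trichotomy_numeral hQ v n a) hψn ((hμ a).mp ha), fun h => (hμ a).mpr (h ▸ hψn)⟩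

end PsiFormula

theorem boolos_incompleteness_general
    (T : Set Formula) (hTsent : ∀ σ ∈ T, σ.IsSentence)
    (hQT : QAxioms ⊆ T)
    (g : ℕ → ℕ) (hg : GoodBound g)
    (φ : Formula) (hφ : DefinesRel φ (BRel T g)) (hφ2 : 2 ∉ φ.allVars)
    (k₂ : ℕ) (hk₂ : (psiOf φ).countFreeOcc 1 < k₂)
    (k : ℕ) (hk : k = (psiOf φ).length * k₂)
    (n : ℕ) (hn : ¬ Nameable T (10 * (k * k)) n)
    (hleast : ∀ m < n, Nameable T (10 * (k * k)) m) :
    IsTrue (((psiOf φ).subst 0 (numeral n)).subst 1 (tTerm k)) ∧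
      ¬ Proves T (((psiOf φ).subst 0 (numeral n)).subst 1 (tTerm k)) := by
  constructor
  · intro v
    rw [Formula.realize_subst_subst zero_ne_one (numeral_varsOf n) (tTerm_varsOf k),
      realize_psiOf hφ2]
    simp only [numeral_val_stdModel, tTerm_val_stdModel, hφ.realize_iff,
      bRel_iff_nameable hg hTsent]
    exact ⟨hn, hleast⟩
  · intro hp
    have hnames := names_psiOf_subst_of_proves hQT hφ.1 hφ2 (tTerm_varsOf k) hp
    have hlen : ((psiOf φ).subst 1 (tTerm k)).length < 10 * (k * k) := by
      subst hk
      exact length_subst_tTerm_lt _ hk₂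
    exact hn ⟨_, hlen, hnames⟩

/-- **Boolos's theorem.** If T is a consistent extension of Q and Pr_T is definable,
then ψ(n,t) is true (in ω), but T does not prove ψ(n,t). -/
theorem boolos_incompleteness
    (T : Set Formula) (hTsent : ∀ σ ∈ T, σ.IsSentence)
    (hQT : QAxioms ⊆ T) (hcons : Consistent T) (hdef : Definable (PrSet T))
    (g : ℕ → ℕ) (hg : GoodBound g)
    (φ : Formula) (hφ : DefinesRel φ (BRel T g)) (hφ2 : 2 ∉ φ.allVars)
    (k₂ : ℕ) (hk₂ : (psiOf φ).countFreeOcc 1 < k₂)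
    (k : ℕ) (hk : k = (psiOf φ).length * k₂)
    (n : ℕ) (hn : ¬ Nameable T (10 * (k * k)) n)
    (hleast : ∀ m < n, Nameable T (10 * (k * k)) m) :
    IsTrue (((psiOf φ).subst 0 (numeral n)).subst 1 (tTerm k)) ∧
      ¬ Proves T (((psiOf φ).subst 0 (numeral n)).subst 1 (tTerm k)) :=
  boolos_incompleteness_general T hTsent hQT g hg φ hφ hφ2 k₂ hk₂ k hk n hn hleast

end Boolos
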